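/- For every $m$ with $-N < m \leq 0$ and every $c, k, t > 0$, the function $G(x) = \int_{\mathbb{R}^N} \exp(-c|x-y|^k/t)\,|y|^m \, dy$ satisfies $G(x) \leq G(0)$ for all $x \in \mathbb{R}^N$. -/

import Mathlib

/-!
Both radial profiles `r ↦ exp (-c r ^ k / t)` and `r ↦ r ^ m` are decreasing, so for every `y` the
two-point rearrangement inequality gives
`f (x - y) g y + f y g (x - y) ≤ f y g y + f (x - y) g (x - y)`.
Integrating, and using that `y ↦ x - y` preserves Lebesgue measure, yields `2 G(x) ≤ 2 G(0)`.
The computation is done with `ℝ≥0∞`-valued integrands, in which `‖y‖ₑ ^ m = ∞` at the origin, so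
that monotonicity holds without exception; the integrability of `exp (-c ‖y‖ ^ k / t) ‖y‖ ^ m`
(polar coordinates and the Gamma integral) then transfers the inequality to Bochner integrals.
-/

open Real MeasureTheory

open scoped ENNReal

theorem mul_add_mul_le_mul_add_mul_of_canonicallyOrderedAdd {R : Type*} [CommSemiring R]
    [PartialOrder R] [CanonicallyOrderedAdd R] {a b c d : R} (hab : a ≤ b) (hcd : c ≤ d) :
    a * d + b * c ≤ a * c + b * d := by
  obtain ⟨u, rfl⟩ := exists_add_of_le hab
  obtain ⟨e, rfl⟩ := exists_add_of_le hcd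
  calc a * (c + e) + (a + u) * c ≤ a * (c + e) + (a + u) * c + u * e := le_self_add
    _ = a * c + (a + u) * (c + e) := by ring

theorem Monovary.mul_add_mul_le_mul_add_mul_of_canonicallyOrderedAdd {ι R : Type*}
    [CommSemiring R] [LinearOrder R] [CanonicallyOrderedAdd R] {f g : ι → R}
    (hfg : Monovary f g) (i j : ι) : f i * g j + f j * g i ≤ f i * g i + f j * g j := by
  rcases lt_or_ge (g j) (g i) with hg | hg
  · rw [add_comm (f i * g j), add_comm (f i * g i)]
    exact _root_.mul_add_mul_le_mul_add_mul_of_canonicallyOrderedAdd (hfg hg) hg.le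
  · rcases hg.lt_or_eq with hg | hg
    · exact _root_.mul_add_mul_le_mul_add_mul_of_canonicallyOrderedAdd (hfg hg) hg.le
    · rw [hg]

theorem ENNReal.rpow_le_rpow_of_nonpos {x y : ℝ≥0∞} {z : ℝ} (hxy : x ≤ y) (hz : z ≤ 0) :
    y ^ z ≤ x ^ z := by
  have := ENNReal.inv_le_inv.2 (ENNReal.rpow_le_rpow hxy (neg_nonneg.2 hz))
  rwa [← ENNReal.rpow_neg, ← ENNReal.rpow_neg, neg_neg] at this

section Translation

variable {G : Type*} [AddCommGroup G] [MeasurableSpace G] [MeasurableAdd G] [MeasurableNeg G]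
  {μ : Measure G} [μ.IsAddLeftInvariant] [μ.IsNegInvariant]

theorem lintegral_comp_sub_mul_le_of_monovary {f g : G → ℝ≥0∞} (hfg : Monovary f g)
    (hmeas : AEMeasurable (fun y ↦ f y * g y) μ) (x : G) :
    ∫⁻ y, f (x - y) * g y ∂μ ≤ ∫⁻ y, f y * g y ∂μ := by
  have hswap : ∫⁻ y, f y * g (x - y) ∂μ = ∫⁻ y, f (x - y) * g y ∂μ := by
    simpa only [sub_sub_cancel] using
      lintegral_sub_left_eq_self (μ := μ) (fun y ↦ f (x - y) * g y) x
  have key : 2 * ∫⁻ y, f (x - y) * g y ∂μ ≤ 2 * ∫⁻ y, f y * g y ∂μ :=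
    calc 2 * ∫⁻ y, f (x - y) * g y ∂μ
        = ∫⁻ y, f (x - y) * g y ∂μ + ∫⁻ y, f y * g (x - y) ∂μ := by rw [hswap, two_mul]
      _ ≤ ∫⁻ y, f (x - y) * g y + f y * g (x - y) ∂μ := le_lintegral_add _ _
      _ ≤ ∫⁻ y, f y * g y + f (x - y) * g (x - y) ∂μ := lintegral_mono fun y ↦ by
        simpa only [add_comm] using
          hfg.mul_add_mul_le_mul_add_mul_of_canonicallyOrderedAdd y (x - y)
      _ = 2 * ∫⁻ y, f y * g y ∂μ := by
        rw [lintegral_add_left' hmeas, lintegral_sub_left_eq_self (μ := μ) (fun y ↦ f y * g y) x,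
          two_mul]
  exact (ENNReal.mul_le_mul_iff_right two_ne_zero ENNReal.ofNat_ne_top).1 key

end Translation

theorem monovary_exp_neg_mul_norm_rpow_enorm_rpow {E : Type*} [SeminormedAddGroup E]
    {c k t m : ℝ} (hc : 0 ≤ c) (hk : 0 ≤ k) (ht : 0 ≤ t) (hm : m ≤ 0) :
    Monovary (fun y : E ↦ ENNReal.ofReal (exp (-c * ‖y‖ ^ k / t))) (fun y : E ↦ ‖y‖ₑ ^ m) := by
  intro i j hij
  have hji : ‖j‖ ≤ ‖i‖ := by
    by_contra! h
    refine hij.not_ge (ENNReal.rpow_le_rpow_of_nonpos ?_ hm)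
    simpa only [← ofReal_norm] using ENNReal.ofReal_le_ofReal h.le
  refine ENNReal.ofReal_le_ofReal (exp_le_exp.2 (div_le_div_of_nonneg_right ?_ ht))
  exact mul_le_mul_of_nonpos_left (rpow_le_rpow (norm_nonneg j) hji hk) (neg_nonpos.2 hc)

theorem integrable_exp_neg_mul_norm_rpow_mul_norm_rpow {E : Type*} [NormedAddCommGroup E]
    [NormedSpace ℝ E] [FiniteDimensional ℝ E] [MeasurableSpace E] [BorelSpace E] [Nontrivial E]
    (μ : Measure E) [μ.IsAddHaarMeasure] {c k t m : ℝ} (hc : 0 < c) (hk : 0 < k) (ht : 0 < t)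
    (hm : -(Module.finrank ℝ E : ℝ) < m) :
    Integrable (fun y : E ↦ exp (-c * ‖y‖ ^ k / t) * ‖y‖ ^ m) μ := by
  have hdim : 1 ≤ Module.finrank ℝ E := Module.finrank_pos
  refine (integrable_fun_norm_addHaar μ (f := fun r ↦ exp (-c * r ^ k / t) * r ^ m)).2 ?_
  refine (integrableOn_rpow_mul_exp_neg_mul_rpow (s := (Module.finrank ℝ E - 1 : ℕ) + m)
    (b := c / t) ?_ hk (div_pos hc ht)).congr_fun (fun r (hr : 0 < r) ↦ ?_) measurableSet_Ioi
  · push_cast [hdim]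
    linarith
  · simp only [smul_eq_mul]
    rw [rpow_add hr, rpow_natCast]
    ring_nf

section NormRpow

variable {E : Type*} [NormedAddGroup E] [MeasurableSpace E] {μ : Measure E} [NullSingletonClass μ]
  {F : E → ℝ}

theorem ofReal_mul_norm_rpow_ae_eq (hF : ∀ y, 0 ≤ F y) (m : ℝ) :
    (fun y ↦ ENNReal.ofReal (F y * ‖y‖ ^ m)) =ᵐ[μ] fun y ↦ ENNReal.ofReal (F y) * ‖y‖ₑ ^ m := by
  filter_upwards [μ.ae_ne 0] with y hy
  rw [ENNReal.ofReal_mul (hF y), ← ofReal_norm, ENNReal.ofReal_rpow_of_pos (norm_pos_iff.2 hy)]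

theorem integral_mul_norm_rpow_eq_toReal_lintegral (hF : ∀ y, 0 ≤ F y) {m : ℝ}
    (hmeas : AEStronglyMeasurable (fun y ↦ F y * ‖y‖ ^ m) μ) :
    ∫ y, F y * ‖y‖ ^ m ∂μ = (∫⁻ y, ENNReal.ofReal (F y) * ‖y‖ₑ ^ m ∂μ).toReal := by
  rw [integral_eq_lintegral_of_nonneg_ae
      (ae_of_all _ fun y ↦ mul_nonneg (hF y) (rpow_nonneg (norm_nonneg y) m)) hmeas,
    lintegral_congr_ae (ofReal_mul_norm_rpow_ae_eq hF m)]

end NormRpow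

/-- The function `G(x) = ∫ exp(-c‖x-y‖^k/t) ‖y‖^m dy` on `ℝ^N` attains its
maximum at `x = 0`, for `-N < m ≤ 0` and `c, k, t > 0`. -/
theorem rearrangement_max_at_zero (N : ℕ) (m c k t : ℝ)
    (hm1 : -(N : ℝ) < m) (hm2 : m ≤ 0) (hc : 0 < c) (hk : 0 < k) (ht : 0 < t)
    (x : EuclideanSpace ℝ (Fin N)) :
    (∫ y : EuclideanSpace ℝ (Fin N), Real.exp (-c * ‖x - y‖ ^ k / t) * ‖y‖ ^ m) ≤
    (∫ y : EuclideanSpace ℝ (Fin N), Real.exp (-c * ‖(0 : EuclideanSpace ℝ (Fin N)) - y‖ ^ k / t) * ‖y‖ ^ m) := by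
  have hN : 0 < N := by exact_mod_cast (by linarith : (0 : ℝ) < N)
  have : Nonempty (Fin N) := ⟨⟨0, hN⟩⟩
  have hint := integrable_exp_neg_mul_norm_rpow_mul_norm_rpow
    (volume : Measure (EuclideanSpace ℝ (Fin N))) hc hk ht (m := m) (by simpa using hm1)
  have hfin : ∫⁻ y : EuclideanSpace ℝ (Fin N),
      ENNReal.ofReal (exp (-c * ‖y‖ ^ k / t)) * ‖y‖ₑ ^ m ≠ ⊤ := by
    rw [← lintegral_congr_ae (ofReal_mul_norm_rpow_ae_eq (fun _ ↦ (exp_pos _).le) m)]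
    exact hint.lintegral_lt_top.ne
  simp only [zero_sub, norm_neg]
  rw [integral_mul_norm_rpow_eq_toReal_lintegral (fun _ ↦ (exp_pos _).le) (by fun_prop),
    integral_mul_norm_rpow_eq_toReal_lintegral (fun _ ↦ (exp_pos _).le) hint.aestronglyMeasurable]
  exact ENNReal.toReal_mono hfin <| lintegral_comp_sub_mul_le_of_monovary
    (monovary_exp_neg_mul_norm_rpow_enorm_rpow hc.le hk.le ht.le hm2) (by fun_prop) x
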